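/- arXiv:1609.03479 — 6 statements merged into one kernel-verified Lean document; each statement's English description precedes it below -/
import Mathlib

section
/- Let x ∈ ℝ^M with all x_k ≠ 0, weights w_k > 0, and r ≥ 1. Then the minimizer over p ∈ (0,∞)^M of ∑_k x_k²/p_k + (∑_k w_k^r p_k^r)^{1/r} is the stationary point p_k = w_k^{−r/(r+1)} |x_k|^{2/(r+1)} ‖W^{1/2}x‖_{2r/(r+1)}^{(r−1)/(r+1)}, and the minimum value equals 2·(∑_k w_k^{r/(r+1)} |x_k|^{2r/(r+1)})^{(r+1)/(2r)} = 2‖W^{1/2}x‖_{2r/(r+1)}. -/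
open Finset

private lemma eq_of_log_eq {a b : ℝ} (ha : 0 < a) (hb : 0 < b)
    (h : Real.log a = Real.log b) : a = b := by
  rw [← Real.exp_log ha, ← Real.exp_log hb, h]

private lemma spice_aux (M : ℕ) (x w q : Fin M → ℝ) (r : ℝ)
    (hx : ∀ k, x k ≠ 0) (hw : ∀ k, 0 < w k) (hr : 1 ≤ r)
    (hq : ∀ k, q k = (w k) ^ (-(r / (r + 1))) * |x k| ^ (2 / (r + 1)) *
        ((∑ j, ((w j) ^ ((1:ℝ)/2) * |x j|) ^ (2 * r / (r + 1))) ^ ((r + 1) / (2 * r)))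
          ^ ((r - 1) / (r + 1))) :
    (∀ k, 0 < q k) ∧
    (∑ k, (x k) ^ 2 / q k + (∑ k, (w k) ^ r * (q k) ^ r) ^ (1 / r) =
      2 * (∑ k, (w k) ^ (r / (r + 1)) * |x k| ^ (2 * r / (r + 1))) ^ ((r + 1) / (2 * r))) ∧
    (∑ k, (x k) ^ 2 / q k + (∑ k, (w k) ^ r * (q k) ^ r) ^ (1 / r) =
      2 * (∑ k, ((w k) ^ ((1:ℝ)/2) * |x k|) ^ (2 * r / (r + 1))) ^ ((r + 1) / (2 * r))) ∧
    ∀ p : Fin M → ℝ, (∀ k, 0 < p k) →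
      ∑ k, (x k) ^ 2 / q k + (∑ k, (w k) ^ r * (q k) ^ r) ^ (1 / r) ≤
      ∑ k, (x k) ^ 2 / p k + (∑ k, (w k) ^ r * (p k) ^ r) ^ (1 / r) := by
  have hr0 : (0:ℝ) < r := lt_of_lt_of_le one_pos hr
  have hr1 : (0:ℝ) < r + 1 := by linarith
  have hrne : r ≠ 0 := ne_of_gt hr0
  have hr1ne : r + 1 ≠ 0 := ne_of_gt hr1
  have hxk : ∀ k, 0 < |x k| := fun k => abs_pos.2 (hx k)
  have hSeq : ∑ j, ((w j) ^ ((1:ℝ)/2) * |x j|) ^ (2 * r / (r + 1))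
      = ∑ j, (w j) ^ (r / (r + 1)) * |x j| ^ (2 * r / (r + 1)) := by
    refine Finset.sum_congr rfl fun j _ => ?_
    rw [Real.mul_rpow (Real.rpow_nonneg (hw j).le _) (abs_nonneg _),
        ← Real.rpow_mul (hw j).le]
    congr 2
    field_simp
  simp only [hq, hSeq]
  set S := ∑ j, (w j) ^ (r / (r + 1)) * |x j| ^ (2 * r / (r + 1)) with hSdef
  set T := S ^ ((r + 1) / (2 * r)) with hTdef
  rcases Nat.eq_zero_or_pos M with hM | hM
  · subst hM
    have h1 : ((1:ℝ)/r) ≠ 0 := by positivity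
    have h2 : ((r+1)/(2*r)) ≠ 0 := by positivity
    simp only [Finset.univ_eq_empty, Finset.sum_empty] at hSdef ⊢
    rw [hTdef, hSdef, Real.zero_rpow h2]
    refine ⟨fun k => k.elim0, by rw [Real.zero_rpow h1]; ring, by rw [Real.zero_rpow h1]; ring,
      fun p hp => le_refl _⟩
  · haveI : Nonempty (Fin M) := ⟨⟨0, hM⟩⟩
    have hS : 0 < S := by
      rw [hSdef]
      exact Finset.sum_pos (fun k _ =>
        mul_pos (Real.rpow_pos_of_pos (hw k) _) (Real.rpow_pos_of_pos (hxk k) _)) univ_nonempty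
    have hT : 0 < T := Real.rpow_pos_of_pos hS _
    have hps : ∀ k, 0 < (w k) ^ (-(r / (r + 1))) * |x k| ^ (2 / (r + 1)) * T ^ ((r - 1) / (r + 1)) :=
      fun k => mul_pos (mul_pos (Real.rpow_pos_of_pos (hw k) _)
        (Real.rpow_pos_of_pos (hxk k) _)) (Real.rpow_pos_of_pos hT _)
    have hST : S = T ^ (2 * r / (r + 1)) := by
      rw [hTdef, ← Real.rpow_mul hS.le,
        show (r + 1) / (2 * r) * (2 * r / (r + 1)) = 1 by field_simp, Real.rpow_one]
    have hw' : ∀ (k : Fin M) (s : ℝ), (w k) ^ s ≠ 0 := fun k s => (Real.rpow_pos_of_pos (hw k) s).ne'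
    have hx' : ∀ (k : Fin M) (s : ℝ), |x k| ^ s ≠ 0 := fun k s => (Real.rpow_pos_of_pos (hxk k) s).ne'
    have hT' : ∀ s : ℝ, T ^ s ≠ 0 := fun s => (Real.rpow_pos_of_pos hT s).ne'
    have hterm1 : ∀ k, (x k) ^ 2 /
        ((w k) ^ (-(r / (r + 1))) * |x k| ^ (2 / (r + 1)) * T ^ ((r - 1) / (r + 1)))
        = (w k) ^ (r / (r + 1)) * |x k| ^ (2 * r / (r + 1)) * T ^ (-((r - 1) / (r + 1))) := by
      intro k
      refine eq_of_log_eq (div_pos (by rw [← sq_abs]; exact pow_pos (hxk k) 2) (hps k))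
        (mul_pos (mul_pos (Real.rpow_pos_of_pos (hw k) _) (Real.rpow_pos_of_pos (hxk k) _))
          (Real.rpow_pos_of_pos hT _)) ?_
      rw [Real.log_div (pow_ne_zero 2 (hx k)) (hps k).ne',
        Real.log_mul (mul_ne_zero (hw' k _) (hx' k _)) (hT' _),
        Real.log_mul (hw' k _) (hx' k _),
        Real.log_mul (mul_ne_zero (hw' k _) (hx' k _)) (hT' _),
        Real.log_mul (hw' k _) (hx' k _),
        Real.log_pow, Real.log_rpow (hw k), Real.log_rpow (hxk k), Real.log_rpow hT,
        Real.log_rpow (hw k), Real.log_rpow (hxk k), Real.log_rpow hT, ← Real.log_abs (x k)]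
      push_cast
      field_simp
      ring
    have hterm2 : ∀ k, (w k) ^ r *
        ((w k) ^ (-(r / (r + 1))) * |x k| ^ (2 / (r + 1)) * T ^ ((r - 1) / (r + 1))) ^ r
        = (w k) ^ (r / (r + 1)) * |x k| ^ (2 * r / (r + 1)) * T ^ (r * (r - 1) / (r + 1)) := by
      intro k
      refine eq_of_log_eq (mul_pos (Real.rpow_pos_of_pos (hw k) _)
          (Real.rpow_pos_of_pos (hps k) _))
        (mul_pos (mul_pos (Real.rpow_pos_of_pos (hw k) _) (Real.rpow_pos_of_pos (hxk k) _))
          (Real.rpow_pos_of_pos hT _)) ?_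
      rw [Real.log_mul (hw' k _) (Real.rpow_pos_of_pos (hps k) r).ne',
        Real.log_rpow (hw k), Real.log_rpow (hps k),
        Real.log_mul (mul_ne_zero (hw' k _) (hx' k _)) (hT' _),
        Real.log_mul (hw' k _) (hx' k _),
        Real.log_mul (mul_ne_zero (hw' k _) (hx' k _)) (hT' _),
        Real.log_mul (hw' k _) (hx' k _),
        Real.log_rpow (hw k), Real.log_rpow (hxk k), Real.log_rpow hT,
        Real.log_rpow (hw k), Real.log_rpow (hxk k), Real.log_rpow hT]
      field_simp
      ring
    have hsum1 : ∑ k, (x k) ^ 2 /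
        ((w k) ^ (-(r / (r + 1))) * |x k| ^ (2 / (r + 1)) * T ^ ((r - 1) / (r + 1))) = T := by
      rw [Finset.sum_congr rfl fun k _ => hterm1 k, ← Finset.sum_mul, ← hSdef, hST,
        ← Real.rpow_add hT, show 2 * r / (r + 1) + -((r - 1) / (r + 1)) = 1 by field_simp; ring,
        Real.rpow_one]
    have hsum2 : ∑ k, (w k) ^ r *
        ((w k) ^ (-(r / (r + 1))) * |x k| ^ (2 / (r + 1)) * T ^ ((r - 1) / (r + 1))) ^ r
        = T ^ r := by
      rw [Finset.sum_congr rfl fun k _ => hterm2 k, ← Finset.sum_mul, ← hSdef, hST,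
        ← Real.rpow_add hT, show 2 * r / (r + 1) + r * (r - 1) / (r + 1) = r by field_simp; ring]
    have hval : ∑ k, (x k) ^ 2 /
        ((w k) ^ (-(r / (r + 1))) * |x k| ^ (2 / (r + 1)) * T ^ ((r - 1) / (r + 1))) +
        (∑ k, (w k) ^ r *
          ((w k) ^ (-(r / (r + 1))) * |x k| ^ (2 / (r + 1)) * T ^ ((r - 1) / (r + 1))) ^ r) ^ (1/r)
        = 2 * T := by
      rw [hsum1, hsum2, ← Real.rpow_mul hT.le, mul_one_div_cancel hrne, Real.rpow_one]
      ring
    refine ⟨hps, hval, hval, fun p hp => ?_⟩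
    rw [hval]
    -- minimality
    set A := ∑ k, (x k) ^ 2 / p k with hAdef
    set B' := ∑ k, (w k) ^ r * (p k) ^ r with hBdef
    have hA : 0 < A := Finset.sum_pos (fun k _ =>
      div_pos (by rw [← sq_abs]; exact pow_pos (hxk k) 2) (hp k)) univ_nonempty
    have hB' : 0 < B' := Finset.sum_pos (fun k _ =>
      mul_pos (Real.rpow_pos_of_pos (hw k) _) (Real.rpow_pos_of_pos (hp k) _)) univ_nonempty
    have hak : ∀ k, 0 < (x k) ^ 2 / p k := fun k =>
      div_pos (by rw [← sq_abs]; exact pow_pos (hxk k) 2) (hp k)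
    have hbk : ∀ k, 0 < (w k) ^ r * (p k) ^ r := fun k =>
      mul_pos (Real.rpow_pos_of_pos (hw k) _) (Real.rpow_pos_of_pos (hp k) _)
    have hconj : Real.HolderConjugate ((r + 1) / r) (r + 1) := by
      rw [Real.holderConjugate_iff]
      constructor
      · rw [lt_div_iff₀ hr0]; linarith
      · rw [inv_div]; field_simp
    have hH := Real.inner_le_Lp_mul_Lq_of_nonneg (s := Finset.univ)
      (f := fun k => ((x k) ^ 2 / p k) ^ (r / (r + 1)))
      (g := fun k => ((w k) ^ r * (p k) ^ r) ^ (1 / (r + 1))) hconj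
      (fun i _ => Real.rpow_nonneg (hak i).le _) (fun i _ => Real.rpow_nonneg (hbk i).le _)
    have hfg : ∀ k, ((x k) ^ 2 / p k) ^ (r / (r + 1)) * ((w k) ^ r * (p k) ^ r) ^ (1 / (r + 1))
        = (w k) ^ (r / (r + 1)) * |x k| ^ (2 * r / (r + 1)) := by
      intro k
      refine eq_of_log_eq (mul_pos (Real.rpow_pos_of_pos (hak k) _)
          (Real.rpow_pos_of_pos (hbk k) _))
        (mul_pos (Real.rpow_pos_of_pos (hw k) _) (Real.rpow_pos_of_pos (hxk k) _)) ?_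
      rw [Real.log_mul (Real.rpow_pos_of_pos (hak k) _).ne' (Real.rpow_pos_of_pos (hbk k) _).ne',
        Real.log_rpow (hak k), Real.log_rpow (hbk k),
        Real.log_div (pow_ne_zero 2 (hx k)) (hp k).ne',
        Real.log_mul (hw' k _) (Real.rpow_pos_of_pos (hp k) _).ne',
        Real.log_rpow (hw k), Real.log_rpow (hp k), Real.log_pow,
        Real.log_mul (hw' k _) (hx' k _), Real.log_rpow (hw k), Real.log_rpow (hxk k),
        ← Real.log_abs (x k)]
      push_cast
      field_simp
      ring
    have hf : ∀ k, (((x k) ^ 2 / p k) ^ (r / (r + 1))) ^ ((r + 1) / r) = (x k) ^ 2 / p k := by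
      intro k
      rw [← Real.rpow_mul (hak k).le, show r / (r + 1) * ((r + 1) / r) = 1 by field_simp,
        Real.rpow_one]
    have hg : ∀ k, (((w k) ^ r * (p k) ^ r) ^ (1 / (r + 1))) ^ (r + 1) = (w k) ^ r * (p k) ^ r := by
      intro k
      rw [← Real.rpow_mul (hbk k).le, one_div_mul_cancel hr1ne, Real.rpow_one]
    rw [Finset.sum_congr rfl fun k _ => hfg k, Finset.sum_congr rfl fun k _ => hf k,
      Finset.sum_congr rfl fun k _ => hg k, ← hSdef, one_div_div] at hH
    -- hH : S ≤ A ^ (r/(r+1)) * B' ^ (1/(r+1))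
    have h2 : S ^ ((r + 1) / r) ≤ (A ^ (r / (r + 1)) * B' ^ (1 / (r + 1))) ^ ((r + 1) / r) :=
      Real.rpow_le_rpow hS.le hH (by positivity)
    have h3 : (A ^ (r / (r + 1)) * B' ^ (1 / (r + 1))) ^ ((r + 1) / r) = A * B' ^ (1 / r) := by
      rw [Real.mul_rpow (Real.rpow_nonneg hA.le _) (Real.rpow_nonneg hB'.le _),
        ← Real.rpow_mul hA.le, ← Real.rpow_mul hB'.le,
        show r / (r + 1) * ((r + 1) / r) = 1 by field_simp,
        show 1 / (r + 1) * ((r + 1) / r) = 1 / r by field_simp, Real.rpow_one]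
    have h4 : T ^ 2 = S ^ ((r + 1) / r) := by
      rw [← Real.rpow_natCast T 2, hTdef, ← Real.rpow_mul hS.le]
      norm_num
      rw [show (r + 1) / (2 * r) * 2 = (r + 1) / r by field_simp]
    have hAB : T ^ 2 ≤ A * B' ^ (1 / r) := by rw [h4]; rw [h3] at h2; exact h2
    have hB : 0 < B' ^ (1 / r) := Real.rpow_pos_of_pos hB' _
    nlinarith [sq_nonneg (A - B' ^ (1 / r)), hAB, hA, hB, hT]

/-- The minimizer over `p ∈ (0,∞)^M` of `∑ x_k²/p_k + (∑ w_k^r p_k^r)^{1/r}` is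
`p_k = w_k^{−r/(r+1)} |x_k|^{2/(r+1)} ‖W^{1/2}x‖_{2r/(r+1)}^{(r−1)/(r+1)}`, and the
minimum value equals `2 (∑ w_k^{r/(r+1)} |x_k|^{2r/(r+1)})^{(r+1)/(2r)} = 2‖W^{1/2}x‖_{2r/(r+1)}`. -/
theorem spice_p_minimization (M : ℕ) (x : Fin M → ℝ) (w : Fin M → ℝ) (r : ℝ)
    (hx : ∀ k, x k ≠ 0) (hw : ∀ k, 0 < w k) (hr : 1 ≤ r) :
    letI F : (Fin M → ℝ) → ℝ := fun p =>
      ∑ k, (x k) ^ 2 / p k + (∑ k, (w k) ^ r * (p k) ^ r) ^ (1 / r)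
    letI pstar : Fin M → ℝ := fun k =>
      (w k) ^ (-(r / (r + 1))) * |x k| ^ (2 / (r + 1)) *
        ((∑ j, ((w j) ^ ((1:ℝ)/2) * |x j|) ^ (2 * r / (r + 1))) ^ ((r + 1) / (2 * r)))
          ^ ((r - 1) / (r + 1))
    (∀ k, 0 < pstar k) ∧
    F pstar =
      2 * (∑ k, (w k) ^ (r / (r + 1)) * |x k| ^ (2 * r / (r + 1))) ^ ((r + 1) / (2 * r)) ∧
    F pstar = 2 * (∑ k, ((w k) ^ ((1:ℝ)/2) * |x k|) ^ (2 * r / (r + 1))) ^ ((r + 1) / (2 * r)) ∧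
    ∀ p : Fin M → ℝ, (∀ k, 0 < p k) → F pstar ≤ F p := by
  exact spice_aux M x w _ r hx hw hr (fun k => rfl)
end

section
/- Let r ∈ ℝ^N with all r_k ≠ 0, weights v_k > 0, q ≥ 1. If σ ∈ (0,∞)^N satisfies, for every k, −r_k²/σ_k² + v_k^q σ_k^{q−1} / ‖Vσ‖_q^{q−1} = 0 (where V = diag(v) and ‖Vσ‖_q = (∑ v_k^q σ_k^q)^{1/q}), then ‖Vσ‖_q = ‖V^{1/2} r‖_{2q/(q+1)}, i.e., (∑_k v_k^q σ_k^q)^{1/q} = (∑_k v_k^{q/(q+1)} |r_k|^{2q/(q+1)})^{(q+1)/(2q)}. -/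
open Finset

/-- If `σ ∈ (0,∞)^N` satisfies the stationarity conditions
`−r_k²/σ_k² + v_k^q σ_k^{q−1}/‖Vσ‖_q^{q−1} = 0` for all `k`, then
`‖Vσ‖_q = ‖V^{1/2}r‖_{2q/(q+1)}`. -/
theorem spice_sigma_norm_identity (N : ℕ) (r : Fin N → ℝ) (v : Fin N → ℝ)
    (σ : Fin N → ℝ) (q : ℝ) (hr : ∀ k, r k ≠ 0) (hv : ∀ k, 0 < v k)
    (hσ : ∀ k, 0 < σ k) (hq : 1 ≤ q)
    (hstat : ∀ k, -(r k) ^ 2 / (σ k) ^ 2 +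
      (v k) ^ q * (σ k) ^ (q - 1) /
        ((∑ j, (v j) ^ q * (σ j) ^ q) ^ (1 / q)) ^ (q - 1) = 0) :
    (∑ k, (v k) ^ q * (σ k) ^ q) ^ (1 / q) =
      (∑ k, (v k) ^ (q / (q + 1)) * |r k| ^ (2 * q / (q + 1))) ^ ((q + 1) / (2 * q)) := by
  have hq0 : (0:ℝ) < q := lt_of_lt_of_le one_pos hq
  have hq1 : (0:ℝ) < q + 1 := by linarith
  rcases Nat.eq_zero_or_pos N with h0 | hN
  · subst h0
    simp only [Finset.univ_eq_empty, Finset.sum_empty]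
    rw [Real.zero_rpow (by positivity : (1:ℝ)/q ≠ 0),
        Real.zero_rpow (by positivity : (q+1)/(2*q) ≠ 0)]
  · haveI : Nonempty (Fin N) := Fin.pos_iff_nonempty.mp hN
    have hS : 0 < ∑ j, v j ^ q * σ j ^ q :=
      Finset.sum_pos (fun j _ => mul_pos (Real.rpow_pos_of_pos (hv j) q)
        (Real.rpow_pos_of_pos (hσ j) q)) Finset.univ_nonempty
    set S := ∑ j, v j ^ q * σ j ^ q with hSdef
    set A := ∑ k, (v k) ^ (q/(q+1)) * |r k| ^ (2*q/(q+1)) with hAdef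
    set T := S ^ (1/q) with hTdef
    have hT : 0 < T := Real.rpow_pos_of_pos hS _
    have hTq : T ^ q = S := by
      rw [hTdef, ← Real.rpow_mul hS.le, one_div_mul_cancel hq0.ne', Real.rpow_one]
    have key : ∀ k, v k ^ q * σ k ^ q
        = v k ^ (q/(q+1)) * |r k| ^ (2*q/(q+1)) * T ^ ((q-1)*(q/(q+1))) := by
      intro k
      have h0 := hstat k
      have hσk := hσ k
      have hTpow : (0:ℝ) < T ^ (q-1) := Real.rpow_pos_of_pos hT _
      have h1 : v k ^ q * σ k ^ (q+1) = |r k| ^ (2:ℝ) * T ^ (q-1) := by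
        have h2 : v k ^ q * σ k ^ (q-1) * (σ k)^2 = (r k)^2 * T ^ (q-1) := by
          have h2' : v k ^ q * σ k ^ (q-1) / T ^ (q-1) = (r k)^2 / (σ k)^2 := by
            rw [neg_div] at h0
            linarith
          field_simp at h2'
          linarith
        calc v k ^ q * σ k ^ (q+1)
            = v k ^ q * σ k ^ (q-1) * (σ k)^2 := by
              rw [mul_assoc]
              congr 1
              rw [show ((σ k)^2 : ℝ) = σ k ^ ((2:ℕ):ℝ) from (Real.rpow_natCast _ 2).symm,
                ← Real.rpow_add hσk]
              congr 1
              push_cast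
              ring
          _ = (r k)^2 * T ^ (q-1) := h2
          _ = |r k| ^ (2:ℝ) * T ^ (q-1) := by
              congr 1
              rw [show (2:ℝ) = ((2:ℕ):ℝ) by norm_num, Real.rpow_natCast, sq_abs]
      have h4 := congrArg (fun x : ℝ => x ^ (q/(q+1))) h1
      rw [Real.mul_rpow (Real.rpow_pos_of_pos (hv k) q).le
            (Real.rpow_pos_of_pos hσk _).le,
          Real.mul_rpow (Real.rpow_nonneg (abs_nonneg _) _) hTpow.le,
          ← Real.rpow_mul (hv k).le, ← Real.rpow_mul hσk.le,
          ← Real.rpow_mul (abs_nonneg _), ← Real.rpow_mul hT.le] at h4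
      have he1 : (q+1) * (q/(q+1)) = q := by field_simp
      rw [he1] at h4
      have hexp : q/(q+1) + q*(q/(q+1)) = q := by field_simp; ring
      calc v k ^ q * σ k ^ q
          = v k ^ (q/(q+1)) * (v k ^ (q*(q/(q+1))) * σ k ^ q) := by
            rw [← mul_assoc, ← Real.rpow_add (hv k), hexp]
        _ = v k ^ (q/(q+1)) * (|r k| ^ (2 * (q/(q+1))) * T ^ ((q-1)*(q/(q+1)))) := by
            rw [h4]
        _ = v k ^ (q/(q+1)) * |r k| ^ (2*q/(q+1)) * T ^ ((q-1)*(q/(q+1))) := by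
            rw [mul_div_assoc]; ring
    have hsum : S = A * T ^ ((q-1)*(q/(q+1))) := by
      rw [hSdef, Finset.sum_congr rfl (fun k _ => key k), ← Finset.sum_mul, hAdef]
    have h6 : A = T ^ (q - (q-1)*(q/(q+1))) := by
      rw [Real.rpow_sub hT, eq_div_iff (Real.rpow_pos_of_pos hT _).ne', hTq, hsum]
    have hexp2 : q - (q-1)*(q/(q+1)) = 2*q/(q+1) := by field_simp; ring
    rw [hexp2] at h6
    calc T = T ^ ((2*q/(q+1)) * ((q+1)/(2*q))) := by
          rw [show (2*q/(q+1)) * ((q+1)/(2*q)) = 1 by field_simp, Real.rpow_one]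
      _ = (T ^ (2*q/(q+1))) ^ ((q+1)/(2*q)) := by rw [Real.rpow_mul hT.le]
      _ = A ^ ((q+1)/(2*q)) := by rw [← h6]
end

section
/- Under the stationarity conditions of the previous context, each σ_k is given explicitly by σ_k = v_k^{−q/(q+1)} |r_k|^{2/(q+1)} ‖V^{1/2}r‖_{2q/(q+1)}^{(q−1)/(q+1)}. -/
open Finset

private lemma log_eq_imp {x y : ℝ} (hx : 0 < x) (hy : 0 < y)
    (h : Real.log x = Real.log y) : x = y :=
  Real.log_injOn_pos (Set.mem_Ioi.2 hx) (Set.mem_Ioi.2 hy) h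

/-- Under the stationarity conditions, each `σ_k` is given explicitly by
`σ_k = v_k^{−q/(q+1)} |r_k|^{2/(q+1)} ‖V^{1/2}r‖_{2q/(q+1)}^{(q−1)/(q+1)}`. -/
theorem spice_sigma_explicit (N : ℕ) (r : Fin N → ℝ) (v : Fin N → ℝ)
    (σ : Fin N → ℝ) (q : ℝ) (hr : ∀ k, r k ≠ 0) (hv : ∀ k, 0 < v k)
    (hσ : ∀ k, 0 < σ k) (hq : 1 ≤ q)
    (hstat : ∀ k, -(r k) ^ 2 / (σ k) ^ 2 +
      (v k) ^ q * (σ k) ^ (q - 1) /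
        ((∑ j, (v j) ^ q * (σ j) ^ q) ^ (1 / q)) ^ (q - 1) = 0) :
    ∀ k, σ k = (v k) ^ (-(q / (q + 1))) * |r k| ^ (2 / (q + 1)) *
      ((∑ j, ((v j) ^ ((1:ℝ)/2) * |r j|) ^ (2 * q / (q + 1))) ^ ((q + 1) / (2 * q)))
        ^ ((q - 1) / (q + 1)) := by
  intro k
  have hq0 : (0:ℝ) < q := lt_of_lt_of_le one_pos hq
  have hq1 : (0:ℝ) < q + 1 := by linarith
  have hq1' : q + 1 ≠ 0 := ne_of_gt hq1
  set S := ∑ j, v j ^ q * σ j ^ q with hSdef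
  have hS : 0 < S := Finset.sum_pos
    (fun j _ => mul_pos (Real.rpow_pos_of_pos (hv j) q) (Real.rpow_pos_of_pos (hσ j) q))
    ⟨k, mem_univ k⟩
  clear_value S
  -- per-index formula
  have key : ∀ j, σ j = |r j| ^ (2/(q+1)) * (v j) ^ (-(q/(q+1))) * S ^ ((q-1)/(q*(q+1))) := by
    intro j
    have h := hstat j
    have hσj := hσ j
    have hvj := hv j
    have hrj : (0:ℝ) < |r j| := abs_pos.2 (hr j)
    have hrne : r j ≠ 0 := hr j
    have hA : (S ^ (1/q)) ^ (q-1) = S ^ ((q-1)/q) := by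
      rw [← Real.rpow_mul hS.le]
      ring_nf
    rw [hA] at h
    have hSA : (0:ℝ) < S ^ ((q-1)/q) := Real.rpow_pos_of_pos hS _
    have h' : (r j)^2 * S ^ ((q-1)/q) = v j ^ q * σ j ^ (q-1) * (σ j)^2 := by
      have h2 : (σ j)^2 ≠ 0 := by positivity
      field_simp at h
      linarith
    have hpow : σ j ^ (q+1) = (r j)^2 * S ^ ((q-1)/q) / v j ^ q := by
      rw [eq_div_iff (ne_of_gt (Real.rpow_pos_of_pos hvj q)), h']
      rw [show (q+1) = (q-1) + 2 by ring, Real.rpow_add hσj,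
        show ((2:ℝ)) = ((2:ℕ):ℝ) by norm_num, Real.rpow_natCast]
      ring
    have hσeq : σ j = ((r j)^2 * S ^ ((q-1)/q) / v j ^ q) ^ (1/(q+1)) := by
      rw [← hpow, ← Real.rpow_mul hσj.le, mul_one_div, div_self hq1', Real.rpow_one]
    rw [hσeq]
    apply log_eq_imp
    · positivity
    · positivity
    rw [Real.log_rpow (by positivity), Real.log_div (by positivity) (by positivity),
      Real.log_mul (by positivity) (by positivity),
      Real.log_mul (by positivity) (by positivity),
      Real.log_mul (by positivity) (by positivity),
      Real.log_rpow hS, Real.log_rpow hvj, Real.log_rpow hrj, Real.log_rpow hvj,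
      Real.log_rpow hS, Real.log_pow, ← Real.log_abs (r j)]
    field_simp
    ring
  -- the sum identity
  set T := ∑ j, ((v j) ^ ((1:ℝ)/2) * |r j|) ^ (2 * q / (q + 1)) with hTdef
  have hT : 0 < T := Finset.sum_pos
    (fun j _ => Real.rpow_pos_of_pos
      (mul_pos (Real.rpow_pos_of_pos (hv j) _) (abs_pos.2 (hr j))) _)
    ⟨k, mem_univ k⟩
  clear_value T
  have hterm : ∀ j, v j ^ q * σ j ^ q
      = ((v j) ^ ((1:ℝ)/2) * |r j|) ^ (2 * q / (q + 1)) * S ^ ((q-1)/(q+1)) := by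
    intro j
    have hvj := hv j
    have hrj : (0:ℝ) < |r j| := abs_pos.2 (hr j)
    rw [key j]
    apply log_eq_imp
    · positivity
    · positivity
    rw [Real.log_mul (by positivity) (by positivity),
      Real.log_mul (by positivity) (by positivity),
      Real.log_rpow hvj,
      Real.log_rpow (by positivity),
      Real.log_mul (by positivity) (by positivity),
      Real.log_mul (by positivity) (by positivity),
      Real.log_rpow hrj, Real.log_rpow hvj, Real.log_rpow hS,
      Real.log_rpow (by positivity), Real.log_rpow hS,
      Real.log_mul (by positivity) (by positivity), Real.log_rpow hvj]
    field_simp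
    ring
  have hsum : S = T * S ^ ((q-1)/(q+1)) := by
    rw [hTdef, Finset.sum_mul]
    conv_lhs => rw [hSdef]
    exact Finset.sum_congr rfl (fun j _ => hterm j)
  have hTS : T = S ^ (2/(q+1)) := by
    have hc : S ^ ((q-1)/(q+1)) ≠ 0 := ne_of_gt (Real.rpow_pos_of_pos hS _)
    have : T = S / S ^ ((q-1)/(q+1)) := by
      rw [eq_div_iff hc]; exact hsum.symm
    rw [this, show (2:ℝ)/(q+1) = 1 - (q-1)/(q+1) from by field_simp; ring,
      Real.rpow_sub hS, Real.rpow_one]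
  rw [key k, hTS, ← Real.rpow_mul hS.le, ← Real.rpow_mul hS.le]
  have hexp : 2/(q+1) * ((q+1)/(2*q)) * ((q-1)/(q+1)) = (q-1)/(q*(q+1)) := by
    field_simp
  rw [hexp]
  ring
end

section
/- Let r ∈ ℝ^N with all r_k ≠ 0, v_k > 0, q ≥ 1. Then the infimum over σ ∈ (0,∞)^N of ∑_k r_k²/σ_k + (∑_k v_k^q σ_k^q)^{1/q} equals 2·(∑_k v_k^{q/(q+1)} |r_k|^{2q/(q+1)})^{(q+1)/(2q)} = 2‖V^{1/2}r‖_{2q/(q+1)}. -/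
/-! Hölder's inequality with exponents `1, q, q / (q + 1)` gives
`C ≤ A ^ (q / (q + 1)) * B ^ (1 / (q + 1))` for `A = ∑ a k / σ k`, `B = ∑ (v k * σ k) ^ q` and
`C = ∑ (a k * v k) ^ (q / (q + 1))`, that is `C ^ ((q + 1) / q) ≤ A * B ^ (1 / q)`. AM–GM then
bounds the objective `A + B ^ (1 / q)` below by `2 * C ^ ((q + 1) / (2 * q))`. Both steps are
equalities for `σ k ∝ (a k * v k) ^ (1 / (q + 1)) / v k`, scaled so that `A = B ^ (1 / q)`.
The theorem is the case `a k = r k ^ 2`. -/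

open Finset Real

theorem rpow_mul_abs_rpow_two_mul_eq_sq_mul_rpow {x : ℝ} (hx : 0 ≤ x) (y s : ℝ) :
    x ^ s * |y| ^ (2 * s) = (y ^ 2 * x) ^ s := by
  rw [rpow_mul (abs_nonneg y), rpow_two, sq_abs, mul_comm, mul_rpow (sq_nonneg y) hx]

theorem rpow_mul_abs_rpow_two_mul_eq_sqrt {x : ℝ} (hx : 0 ≤ x) (y s : ℝ) :
    x ^ s * |y| ^ (2 * s) = (x ^ (1 / 2 : ℝ) * |y|) ^ (2 * s) := by
  rw [mul_rpow (rpow_nonneg hx _) (abs_nonneg y), ← rpow_mul hx]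
  ring_nf

section

variable {ι : Type*} [Fintype ι]

noncomputable def spiceObjective (a v : ι → ℝ) (q : ℝ) (σ : ι → ℝ) : ℝ :=
  ∑ k, a k / σ k + (∑ k, v k ^ q * σ k ^ q) ^ (1 / q)

theorem sum_mul_rpow_le_rpow_mul_rpow {a v σ : ι → ℝ} {q : ℝ} (hq : 0 < q)
    (ha : ∀ k, 0 ≤ a k) (hv : ∀ k, 0 ≤ v k) (hσ : ∀ k, 0 < σ k) :
    ∑ k, (a k * v k) ^ (q / (q + 1)) ≤
      (∑ k, a k / σ k) ^ (q / (q + 1)) * (∑ k, v k ^ q * σ k ^ q) ^ (1 / (q + 1)) := by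
  have hpqr : (1 : ℝ).HolderTriple q (q / (q + 1)) := ⟨by field_simp, one_pos, hq⟩
  calc ∑ k, (a k * v k) ^ (q / (q + 1))
      = ∑ k, (a k / σ k * (v k * σ k)) ^ (q / (q + 1)) := by
        refine sum_congr rfl fun k _ => ?_
        field_simp [(hσ k).ne']
    _ ≤ (∑ k, (a k / σ k) ^ (1 : ℝ)) ^ (q / (q + 1) / 1) *
          (∑ k, (v k * σ k) ^ q) ^ (q / (q + 1) / q) :=
        Lr_rpow_le_Lp_mul_Lq_of_nonneg univ hpqr (fun k _ => div_nonneg (ha k) (hσ k).le)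
          (fun k _ => mul_nonneg (hv k) (hσ k).le)
    _ = _ := by
        simp only [rpow_one, div_one]
        congr 2
        · exact sum_congr rfl fun k _ => mul_rpow (hv k) (hσ k).le
        · field_simp

theorem two_mul_rpow_le_spiceObjective {a v σ : ι → ℝ} {q : ℝ} (hq : 0 < q)
    (ha : ∀ k, 0 ≤ a k) (hv : ∀ k, 0 ≤ v k) (hσ : ∀ k, 0 < σ k) :
    2 * (∑ k, (a k * v k) ^ (q / (q + 1))) ^ ((q + 1) / (2 * q)) ≤ spiceObjective a v q σ := by
  set C := ∑ k, (a k * v k) ^ (q / (q + 1))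
  set A := ∑ k, a k / σ k
  set B := ∑ k, v k ^ q * σ k ^ q
  have hC : 0 ≤ C := sum_nonneg fun k _ => rpow_nonneg (mul_nonneg (ha k) (hv k)) _
  have hA : 0 ≤ A := sum_nonneg fun k _ => div_nonneg (ha k) (hσ k).le
  have hB : 0 ≤ B := sum_nonneg fun k _ => by have := hv k; have := hσ k; positivity
  have key : C ^ ((q + 1) / q) ≤ A * B ^ (1 / q) := calc
    C ^ ((q + 1) / q) ≤ (A ^ (q / (q + 1)) * B ^ (1 / (q + 1))) ^ ((q + 1) / q) := by
      gcongr
      exact sum_mul_rpow_le_rpow_mul_rpow hq ha hv hσ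
    _ = A * B ^ (1 / q) := by
      rw [mul_rpow (by positivity) (by positivity), ← rpow_mul hA, ← rpow_mul hB]
      congr 2 <;> field_simp
      rw [rpow_one]
  calc 2 * C ^ ((q + 1) / (2 * q)) = 2 * (C ^ ((q + 1) / q)) ^ (1 / 2 : ℝ) := by
        rw [← rpow_mul hC]; congr 2; field_simp
    _ ≤ 2 * (A ^ (1 / 2 : ℝ) * (B ^ (1 / q)) ^ (1 / 2 : ℝ)) := by
        rw [← mul_rpow hA (by positivity)]; gcongr
    _ ≤ 2 * (1 / 2 * A + 1 / 2 * B ^ (1 / q)) := by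
        gcongr
        exact geom_mean_le_arith_mean2_weighted (by norm_num) (by norm_num) hA (by positivity)
          (by norm_num)
    _ = spiceObjective a v q σ := by rw [spiceObjective]; ring

-- On this ray `a k / σ k` and `(v k * σ k) ^ q` are both proportional to
-- `(a k * v k) ^ (q / (q + 1))`: the equality case of the Hölder step.
theorem spiceObjective_along_optimal_ray {a v : ι → ℝ} {q t : ℝ} (hq : 0 < q) (ht : 0 < t)
    (ha : ∀ k, 0 < a k) (hv : ∀ k, 0 < v k) :
    spiceObjective a v q (fun k => t * (a k * v k) ^ (1 / (q + 1)) / v k) =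
      (∑ k, (a k * v k) ^ (q / (q + 1))) / t +
        t * (∑ k, (a k * v k) ^ (q / (q + 1))) ^ (1 / q) := by
  set C := ∑ k, (a k * v k) ^ (q / (q + 1))
  have hav : ∀ k, 0 < a k * v k := fun k => mul_pos (ha k) (hv k)
  have hdiv : ∀ k, a k / (t * (a k * v k) ^ (1 / (q + 1)) / v k) =
      (a k * v k) ^ (q / (q + 1)) / t := by
    intro k
    have hsplit : a k * v k = (a k * v k) ^ (1 / (q + 1)) * (a k * v k) ^ (q / (q + 1)) := by
      rw [← rpow_add (hav k), ← add_div, add_comm, div_self (by linarith), rpow_one]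
    have := (hv k).ne'
    have : (a k * v k) ^ (1 / (q + 1)) ≠ 0 := (rpow_pos_of_pos (hav k) _).ne'
    field_simp
    linear_combination hsplit
  have hpow : ∀ k, v k ^ q * (t * (a k * v k) ^ (1 / (q + 1)) / v k) ^ q =
      t ^ q * (a k * v k) ^ (q / (q + 1)) := by
    intro k
    rw [← mul_rpow (hv k).le (by have := hav k; have := hv k; positivity),
      mul_div_cancel₀ _ (hv k).ne',
      mul_rpow ht.le (rpow_nonneg (hav k).le _), ← rpow_mul (hav k).le, one_div_mul_eq_div]
  have hC : 0 ≤ C := sum_nonneg fun k _ => (rpow_pos_of_pos (hav k) _).le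
  rw [spiceObjective]
  simp only [hdiv, hpow, ← sum_div, ← mul_sum]
  rw [mul_rpow (rpow_nonneg ht.le _) hC, ← rpow_mul ht.le, mul_one_div_cancel hq.ne', rpow_one]

theorem isLeast_spiceObjective {a v : ι → ℝ} {q : ℝ} (hq : 0 < q) (ha : ∀ k, 0 < a k)
    (hv : ∀ k, 0 < v k) :
    IsLeast {val | ∃ σ : ι → ℝ, (∀ k, 0 < σ k) ∧ val = spiceObjective a v q σ}
      (2 * (∑ k, (a k * v k) ^ (q / (q + 1))) ^ ((q + 1) / (2 * q))) := by
  refine ⟨?_, fun _ ⟨σ, hσ, hval⟩ => hval ▸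
    two_mul_rpow_le_spiceObjective hq (fun k => (ha k).le) (fun k => (hv k).le) hσ⟩
  set C := ∑ k, (a k * v k) ^ (q / (q + 1))
  rcases isEmpty_or_nonempty ι with hι | hι
  · refine ⟨1, fun _ => one_pos, ?_⟩
    simp [C, spiceObjective, zero_rpow, hq.ne', (by positivity : (q + 1) / (2 * q) ≠ 0)]
  have hC : 0 < C := sum_pos (fun k _ => rpow_pos_of_pos (mul_pos (ha k) (hv k)) _) univ_nonempty
  have ht : 0 < C ^ ((q - 1) / (2 * q)) := rpow_pos_of_pos hC _
  refine ⟨fun k => C ^ ((q - 1) / (2 * q)) * (a k * v k) ^ (1 / (q + 1)) / v k,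
    fun k => by have := ha k; have := hv k; positivity, ?_⟩
  -- `t = C ^ ((q - 1) / (2 * q))` balances the two summands `C / t` and `t * C ^ (1 / q)`.
  have hbalance₁ : C / C ^ ((q - 1) / (2 * q)) = C ^ ((q + 1) / (2 * q)) := by
    rw [div_eq_iff ht.ne', ← rpow_add hC]
    conv_lhs => rw [← rpow_one C]
    congr 1; field_simp; ring
  have hbalance₂ : C ^ ((q - 1) / (2 * q)) * C ^ (1 / q) = C ^ ((q + 1) / (2 * q)) := by
    rw [← rpow_add hC]
    congr 1; field_simp; ring
  rw [spiceObjective_along_optimal_ray hq ht ha hv, hbalance₁, hbalance₂]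
  ring

end

/-- The infimum over `σ ∈ (0,∞)^N` of `∑ r_k²/σ_k + (∑ v_k^q σ_k^q)^{1/q}` equals
`2·(∑ v_k^{q/(q+1)} |r_k|^{2q/(q+1)})^{(q+1)/(2q)} = 2‖V^{1/2}r‖_{2q/(q+1)}`. -/
theorem spice_sigma_infimum (N : ℕ) (r : Fin N → ℝ) (v : Fin N → ℝ) (q : ℝ)
    (hr : ∀ k, r k ≠ 0) (hv : ∀ k, 0 < v k) (hq : 1 ≤ q) :
    IsGLB {val : ℝ | ∃ σ : Fin N → ℝ, (∀ k, 0 < σ k) ∧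
        val = ∑ k, (r k) ^ 2 / σ k + (∑ k, (v k) ^ q * (σ k) ^ q) ^ (1 / q)}
      (2 * (∑ k, (v k) ^ (q / (q + 1)) * |r k| ^ (2 * q / (q + 1))) ^ ((q + 1) / (2 * q))) ∧
    2 * (∑ k, (v k) ^ (q / (q + 1)) * |r k| ^ (2 * q / (q + 1))) ^ ((q + 1) / (2 * q)) =
      2 * (∑ k, ((v k) ^ ((1:ℝ)/2) * |r k|) ^ (2 * q / (q + 1))) ^ ((q + 1) / (2 * q)) := by
  have hexp : 2 * q / (q + 1) = 2 * (q / (q + 1)) := mul_div_assoc _ _ _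
  refine ⟨?_, by simp only [hexp, rpow_mul_abs_rpow_two_mul_eq_sqrt (hv _).le]⟩
  simp only [hexp, rpow_mul_abs_rpow_two_mul_eq_sq_mul_rpow (hv _).le]
  exact (isLeast_spiceObjective (by linarith) (fun k => by have := hr k; positivity) hv).isGLB
end

section
/- Let Σ be a positive definite diagonal N×N real matrix, B ∈ ℝ^{N×M}, P̃ a positive definite diagonal M×M matrix, and R = BP̃Bᵀ + Σ. Then R is positive definite, and the function x ↦ (y−Bx)ᵀΣ^{−1}(y−Bx) + xᵀP̃^{−1}x is strictly convex with unique minimizer x̂ = P̃BᵀR^{−1}y. -/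
/-!
Complete the square: with `A = Bᵀ Σ⁻¹ B + P̃⁻¹`, which is positive definite, the objective equals
`(x - x̂)ᵀ A (x - x̂) + f x̂` whenever `x̂` solves the normal equation `A x̂ = Bᵀ Σ⁻¹ y`, and the
push-through identity `A P̃ Bᵀ R⁻¹ = Bᵀ Σ⁻¹` shows that `x̂ = P̃ Bᵀ R⁻¹ y` does. Strict convexity and
strict minimality at `x̂` are then properties of the positive definite form `A`.
-/

open Matrix

namespace Matrix

variable {m n α : Type*} [Fintype m] [Fintype n]

section CommRing

variable [CommRing α]

lemma IsSymm.dotProduct_mulVec_comm {S : Matrix n n α} (hS : S.IsSymm) (u v : n → α) :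
    u ⬝ᵥ S *ᵥ v = v ⬝ᵥ S *ᵥ u := by
  conv_lhs => rw [← hS.eq]
  exact dotProduct_transpose_mulVec S u v

lemma mulVec_dotProduct_mulVec_mulVec (B : Matrix m n α) (S : Matrix m m α) (u v : n → α) :
    B *ᵥ u ⬝ᵥ S *ᵥ (B *ᵥ v) = u ⬝ᵥ (Bᵀ * S * B) *ᵥ v := by
  rw [← mulVec_mulVec, ← mulVec_mulVec, dotProduct_transpose_mulVec, dotProduct_comm]

lemma smul_add_smul_dotProduct_mulVec_smul_add_smul (A : Matrix n n α) (u v : n → α) {a b : α}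
    (hab : a + b = 1) :
    (a • u + b • v) ⬝ᵥ A *ᵥ (a • u + b • v) + a * b * ((u - v) ⬝ᵥ A *ᵥ (u - v)) =
      a * (u ⬝ᵥ A *ᵥ u) + b * (v ⬝ᵥ A *ᵥ v) := by
  simp only [mulVec_add, mulVec_sub, mulVec_smul, dotProduct_add, add_dotProduct, dotProduct_sub,
    sub_dotProduct, dotProduct_smul, smul_dotProduct, smul_eq_mul]
  linear_combination (a * (u ⬝ᵥ A *ᵥ u) + b * (v ⬝ᵥ A *ᵥ v)) * hab

lemma completing_square_of_normal_eq {S : Matrix m m α} {Q : Matrix n n α}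
    (hS : S.IsSymm) (hQ : Q.IsSymm) (B : Matrix m n α) (y : m → α) {x₀ : n → α}
    (hx₀ : (Bᵀ * S * B + Q) *ᵥ x₀ = (Bᵀ * S) *ᵥ y) (x : n → α) :
    (y - B *ᵥ x) ⬝ᵥ S *ᵥ (y - B *ᵥ x) + x ⬝ᵥ Q *ᵥ x =
      (x - x₀) ⬝ᵥ (Bᵀ * S * B + Q) *ᵥ (x - x₀) +
        ((y - B *ᵥ x₀) ⬝ᵥ S *ᵥ (y - B *ᵥ x₀) + x₀ ⬝ᵥ Q *ᵥ x₀) := by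
  obtain ⟨d, rfl⟩ : ∃ d, x = x₀ + d := ⟨x - x₀, by abel⟩
  set r := y - B *ᵥ x₀
  have hr : y - B *ᵥ (x₀ + d) = r - B *ᵥ d := by rw [mulVec_add, sub_add_eq_sub_sub]
  have hcross : B *ᵥ d ⬝ᵥ S *ᵥ r = d ⬝ᵥ Q *ᵥ x₀ := by
    have hy : B *ᵥ d ⬝ᵥ S *ᵥ y = d ⬝ᵥ (Bᵀ * S) *ᵥ y := by
      rw [← mulVec_mulVec, dotProduct_transpose_mulVec, dotProduct_comm]
    rw [mulVec_sub, dotProduct_sub, mulVec_dotProduct_mulVec_mulVec, hy, ← hx₀, add_mulVec,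
      dotProduct_add, add_sub_cancel_left]
  rw [hr, add_sub_cancel_left, add_mulVec, dotProduct_add, ← mulVec_dotProduct_mulVec_mulVec]
  simp only [mulVec_add, mulVec_sub, dotProduct_add, add_dotProduct, dotProduct_sub, sub_dotProduct]
  linear_combination (-2) * hcross - hS.dotProduct_mulVec_comm r (B *ᵥ d) -
    hQ.dotProduct_mulVec_comm d x₀

/-- The push-through form of the Woodbury identity. -/
lemma mul_inv_mul_add_inv_mul_mul_mul_add_inv [DecidableEq m] [DecidableEq n]
    {P : Matrix n n α} {S : Matrix m m α} (B : Matrix m n α) (C : Matrix n m α)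
    (hP : IsUnit P) (hS : IsUnit S) (hR : IsUnit (B * P * C + S)) :
    (C * S⁻¹ * B + P⁻¹) * (P * C * (B * P * C + S)⁻¹) = C * S⁻¹ := by
  rw [isUnit_iff_isUnit_det] at hP hS hR
  have h : (C * S⁻¹ * B + P⁻¹) * P * C = C * S⁻¹ * (B * P * C + S) := by
    rw [Matrix.add_mul, Matrix.add_mul, nonsing_inv_mul _ hP, Matrix.one_mul, Matrix.mul_add,
      nonsing_inv_mul_cancel_right _ _ hS]
    simp only [Matrix.mul_assoc]
  rw [← Matrix.mul_assoc, ← Matrix.mul_assoc, h, mul_nonsing_inv_cancel_right _ _ hR]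

end CommRing

lemma PosDef.strictConvexOn_dotProduct_mulVec_sub {A : Matrix n n ℝ} (hA : A.PosDef)
    (x₀ : n → ℝ) : StrictConvexOn ℝ Set.univ fun x => (x - x₀) ⬝ᵥ A *ᵥ (x - x₀) := by
  refine ⟨convex_univ, fun x _ z _ hxz a b ha hb hab => ?_⟩
  have hcombo : a • x + b • z - x₀ = a • (x - x₀) + b • (z - x₀) := by
    rw [smul_sub, smul_sub, sub_add_sub_comm, Convex.combo_self hab]
  have hpos : 0 < (x - z) ⬝ᵥ A *ᵥ (x - z) := by
    simpa using hA.dotProduct_mulVec_pos (sub_ne_zero.mpr hxz)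
  have hgap := smul_add_smul_dotProduct_mulVec_smul_add_smul A (x - x₀) (z - x₀) hab
  rw [sub_sub_sub_cancel_right] at hgap
  simp only [smul_eq_mul, hcombo]
  nlinarith [mul_pos (mul_pos ha hb) hpos]

end Matrix

/-- Real version of Lemma 1: with `R = B P̃ Bᵀ + Σ` (`P̃`, `Σ` positive definite
diagonal), `R` is positive definite, and
`x ↦ (y−Bx)ᵀ Σ⁻¹ (y−Bx) + xᵀ P̃⁻¹ x` is strictly convex with unique minimizer
`x̂ = P̃ Bᵀ R⁻¹ y`. -/
theorem spice_lemma1_real_convexity (M N : ℕ) (B : Matrix (Fin N) (Fin M) ℝ)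
    (p : Fin M → ℝ) (s : Fin N → ℝ) (hp : ∀ k, 0 < p k) (hs : ∀ k, 0 < s k)
    (y : Fin N → ℝ)
    (Ptil : Matrix (Fin M) (Fin M) ℝ) (hPtil : Ptil = Matrix.diagonal p)
    (Sig : Matrix (Fin N) (Fin N) ℝ) (hSig : Sig = Matrix.diagonal s)
    (R : Matrix (Fin N) (Fin N) ℝ) (hR : R = B * Ptil * Bᵀ + Sig) :
    letI f : (Fin M → ℝ) → ℝ := fun x =>
      (y - B.mulVec x) ⬝ᵥ Sig⁻¹.mulVec (y - B.mulVec x) + x ⬝ᵥ Ptil⁻¹.mulVec x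
    letI xhat : Fin M → ℝ := (Ptil * Bᵀ * R⁻¹).mulVec y
    R.PosDef ∧ StrictConvexOn ℝ Set.univ f ∧
    ∀ x : Fin M → ℝ, x ≠ xhat → f xhat < f x := by
  set f : (Fin M → ℝ) → ℝ := fun x => (y - B *ᵥ x) ⬝ᵥ Sig⁻¹ *ᵥ (y - B *ᵥ x) + x ⬝ᵥ Ptil⁻¹ *ᵥ x
  set xhat := (Ptil * Bᵀ * R⁻¹) *ᵥ y
  have hPpd : Ptil.PosDef := hPtil ▸ .diagonal hp
  have hSpd : Sig.PosDef := hSig ▸ .diagonal hs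
  have hRpd : R.PosDef := by
    simpa [hR] using PosDef.posSemidef_add (hPpd.posSemidef.mul_mul_conjTranspose_same B) hSpd
  have hApd : (Bᵀ * Sig⁻¹ * B + Ptil⁻¹).PosDef := by
    simpa using PosDef.posSemidef_add (hSpd.inv.posSemidef.conjTranspose_mul_mul_same B) hPpd.inv
  have hnormal : (Bᵀ * Sig⁻¹ * B + Ptil⁻¹) *ᵥ xhat = (Bᵀ * Sig⁻¹) *ᵥ y := by
    rw [mulVec_mulVec, hR, mul_inv_mul_add_inv_mul_mul_mul_add_inv B Bᵀ hPpd.isUnit hSpd.isUnit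
      (hR ▸ hRpd.isUnit)]
  have hf : ∀ x, f x = (x - xhat) ⬝ᵥ (Bᵀ * Sig⁻¹ * B + Ptil⁻¹) *ᵥ (x - xhat) + f xhat :=
    completing_square_of_normal_eq (by simpa using hSpd.inv.isHermitian)
      (by simpa using hPpd.inv.isHermitian) B y hnormal
  refine ⟨hRpd, funext hf ▸ (hApd.strictConvexOn_dotProduct_mulVec_sub xhat).add_const _,
    fun x hx => ?_⟩
  rw [hf x, lt_add_iff_pos_left]
  simpa using hApd.dotProduct_mulVec_pos (sub_ne_zero.mpr hx)
end

section
/- Hölder-type lower bound: for t ∈ ℝ^N with t_k > 0, q ≥ 1, and any u ∈ (0,∞)^N, one has ∑_k t_k²/u_k + (∑_k u_k^q)^{1/q} ≥ 2(∑_k t_k^{2q/(q+1)})^{(q+1)/(2q)}. -/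
open Finset

/-!
Hölder's inequality with exponents `1`, `q` and `q/(q+1)` (so `1 + 1/q = (q+1)/q`), applied to
`t_k²/u_k` and `u_k`, gives `∑ t_k^{2q/(q+1)} ≤ (A B)^{q/(q+1)}` with `A = ∑ t_k²/u_k` and
`B = (∑ u_k^q)^{1/q}`. Raising to the power `(q+1)/(2q)` leaves `√(A B)`, and AM-GM gives
`2 √(A B) ≤ A + B`.
-/

namespace Real

lemma two_mul_sqrt_mul_le_add {a b : ℝ} (ha : 0 ≤ a) (hb : 0 ≤ b) : 2 * √(a * b) ≤ a + b := by
  rw [sqrt_mul ha]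
  nlinarith [sq_sqrt ha, sq_sqrt hb, sq_nonneg (√a - √b)]

lemma holderTriple_one_self_div_add_one {q : ℝ} (hq : 0 < q) : HolderTriple 1 q (q / (q + 1)) :=
  ⟨by field_simp, one_pos, hq⟩

lemma sum_rpow_le_sum_div_mul_Lq_rpow {ι : Type*} (s : Finset ι) {x u : ι → ℝ} {q : ℝ}
    (hq : 0 < q) (hx : ∀ i ∈ s, 0 ≤ x i) (hu : ∀ i ∈ s, 0 < u i) :
    ∑ i ∈ s, x i ^ (q / (q + 1)) ≤
      ((∑ i ∈ s, x i / u i) * (∑ i ∈ s, u i ^ q) ^ (1 / q)) ^ (q / (q + 1)) := by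
  have holder := Lr_rpow_le_Lp_mul_Lq_of_nonneg s (holderTriple_one_self_div_add_one hq)
    (fun i hi => div_nonneg (hx i hi) (hu i hi).le) (fun i hi => (hu i hi).le)
  have hsum_u : 0 ≤ ∑ i ∈ s, u i ^ q := sum_nonneg fun i hi => rpow_nonneg (hu i hi).le _
  rw [mul_rpow (sum_nonneg fun i hi => div_nonneg (hx i hi) (hu i hi).le)
      (rpow_nonneg hsum_u _), ← rpow_mul hsum_u]
  convert holder using 2 with i hi
  · rw [div_mul_cancel₀ _ (hu i hi).ne']
  · simp only [rpow_one, div_one]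
  · field_simp

end Real

open Real in
/-- Hölder-type lower bound: for `t_k > 0`, `q ≥ 1`, and any `u ∈ (0,∞)^N`,
`∑ t_k²/u_k + (∑ u_k^q)^{1/q} ≥ 2 (∑ t_k^{2q/(q+1)})^{(q+1)/(2q)}`. -/
theorem spice_holder_lower_bound (N : ℕ) (t : Fin N → ℝ) (q : ℝ)
    (ht : ∀ k, 0 < t k) (hq : 1 ≤ q) :
    ∀ u : Fin N → ℝ, (∀ k, 0 < u k) →
      2 * (∑ k, (t k) ^ (2 * q / (q + 1))) ^ ((q + 1) / (2 * q)) ≤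
        ∑ k, (t k) ^ 2 / u k + (∑ k, (u k) ^ q) ^ (1 / q) := by
  intro u hu
  have hq0 : 0 < q := by linarith
  set A := ∑ k, t k ^ 2 / u k
  set B := (∑ k, u k ^ q) ^ (1 / q)
  have hA : 0 ≤ A := sum_nonneg fun k _ => div_nonneg (sq_nonneg _) (hu k).le
  have hB : 0 ≤ B := rpow_nonneg (sum_nonneg fun k _ => rpow_nonneg (hu k).le _) _
  have holder : ∑ k, t k ^ (2 * q / (q + 1)) ≤ (A * B) ^ (q / (q + 1)) := by
    have hpow (k : Fin N) : (t k ^ 2) ^ (q / (q + 1)) = t k ^ (2 * q / (q + 1)) := by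
      rw [← rpow_natCast, ← rpow_mul (ht k).le, Nat.cast_ofNat, mul_div_assoc]
    simpa only [hpow] using
      sum_rpow_le_sum_div_mul_Lq_rpow univ hq0 (x := fun k => t k ^ 2) (fun k _ => sq_nonneg _)
        (fun k _ => hu k)
  calc 2 * (∑ k, t k ^ (2 * q / (q + 1))) ^ ((q + 1) / (2 * q))
      ≤ 2 * ((A * B) ^ (q / (q + 1))) ^ ((q + 1) / (2 * q)) := by
        gcongr
        exact sum_nonneg fun k _ => rpow_nonneg (ht k).le _
    _ = 2 * √(A * B) := by
      rw [← rpow_mul (mul_nonneg hA hB), sqrt_eq_rpow]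
      congr 2
      field_simp
    _ ≤ A + B := two_mul_sqrt_mul_le_add hA hB
end
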